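/- Let F = ⟨A, R, W, S⟩ be a semiring-based weighted argumentation framework over an absorptive c-semiring S, let Z ⊆ A be a w-admissible extension of F, and let B = A \ (Z ∪ R⁺(Z)). If T ⊆ B is a w-admissible extension of the restricted framework F|_B and every argument of T is w-defended by Z ∪ T in F, then Z ∪ T is a w-admissible extension of F. -/

import Mathlib

open Finset

variable {A : Type*} [Fintype A] [DecidableEq A] {S : Type*} [CommSemiring S]

/-- The order induced by the idempotent addition of a c-semiring: `a ≤ₛ b` iff `a + b = b`. -/
def sLE (a b : S) : Prop := a + b = b

/-- The attack weight `W(B, D)` from a set of arguments `B` to a set `D`: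
the semiring product of all pairwise weights. -/
def Wsets (W : A → A → S) (B D : Finset A) : S := ∏ b ∈ B, ∏ d ∈ D, W b d

/-- `B` is w-conflict-free iff `W(B, B) = ⊤` (here `⊤` is the multiplicative unit `1`). -/
def wConflictFree (W : A → A → S) (B : Finset A) : Prop := Wsets W B B = 1

/-- Within the framework whose set of arguments is `U`, the set `B` w-defends `b`:
for every attacker `a ∈ U` of `b` (i.e. `W a b ≠ ⊤`), `W(a, B ∪ {b}) ≥ₛ W(B, a)`. -/
def wDefendsIn (W : A → A → S) (U B : Finset A) (b : A) : Prop :=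
  ∀ a ∈ U, W a b ≠ 1 → sLE (Wsets W B {a}) (Wsets W {a} (insert b B))

/-- `B` is w-admissible in the framework with argument set `U`:
`B ⊆ U`, `B` is w-conflict-free, and `B` w-defends each of its members. -/
def wAdmissibleIn (W : A → A → S) (U B : Finset A) : Prop :=
  B ⊆ U ∧ wConflictFree W B ∧ ∀ b ∈ B, wDefendsIn W U B b

/-- `B` is a w-stable extension: w-admissible and every argument of `U` outside `B`
is attacked by some member of `B`. -/
def wStableIn (W : A → A → S) (U B : Finset A) : Prop :=
  wAdmissibleIn W U B ∧ ∀ a ∈ U, a ∉ B → ∃ b ∈ B, W b a ≠ 1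

/-- `B` is a w-complete extension: w-admissible and it contains every argument `b`
such that `B ∪ {b}` is w-admissible. -/
def wCompleteIn (W : A → A → S) (U B : Finset A) : Prop :=
  wAdmissibleIn W U B ∧ ∀ b ∈ U, wAdmissibleIn W U (insert b B) → b ∈ B

/-- `B` is a w-preferred extension: a ⊆-maximal w-admissible subset. -/
def wPreferredIn (W : A → A → S) (U B : Finset A) : Prop :=
  wAdmissibleIn W U B ∧ ∀ C : Finset A, wAdmissibleIn W U C → B ⊆ C → C = B

/-!
By the choice of `B`, no member of `Z` attacks `T`. In an absorptive c-semiring `⊤ = 1` is the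
greatest element; so if `t ∈ T` attacked a member of `Z`, the defence of that member by `Z` would
read `W(Z, t) = ⊤ ≤ W(t, Z)`, forcing `W(t, Z) = ⊤`. Hence `Z ∪ T` is conflict-free. An attacker `a`
of some member of `Z` either attacks some member of `T`, and then the defence of `T` by `Z ∪ T`
applies verbatim, or it does not, and then `W(a, Z ∪ T) = W(a, Z)` while
`W(Z ∪ T, a) = W(Z, a) ⊗ W(T, a) ≤ W(Z, a)`, so the defence given by `Z` alone suffices.
-/

lemma sLE_trans {a b c : S} (hab : sLE a b) (hbc : sLE b c) : sLE a c := by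
  unfold sLE at *
  rw [← hbc, ← add_assoc, hab]

lemma sLE_mul_left (habs : ∀ s t : S, s + s * t = s) (x y : S) : sLE (x * y) x := by
  unfold sLE
  rw [add_comm]
  exact habs x y

lemma eq_one_of_one_sLE (habs : ∀ s t : S, s + s * t = s) {x : S} (h : sLE 1 x) : x = 1 := by
  have hx := habs 1 x
  rw [one_mul] at hx
  exact h.symm.trans hx

section Weights

variable {α : Type*} {W : α → α → S}

lemma Wsets_singleton_left (a : α) (D : Finset α) : Wsets W {a} D = ∏ d ∈ D, W a d :=
  prod_singleton _ _

lemma Wsets_singleton_right (C : Finset α) (a : α) : Wsets W C {a} = ∏ b ∈ C, W b a :=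
  prod_congr rfl fun _ _ => prod_singleton _ _

lemma Wsets_eq_one {X Y : Finset α} (h : ∀ x ∈ X, ∀ y ∈ Y, W x y = 1) : Wsets W X Y = 1 :=
  prod_eq_one fun x hx => prod_eq_one (h x hx)

variable [DecidableEq α]

lemma Wsets_union_left {X Y : Finset α} (h : Disjoint X Y) (D : Finset α) :
    Wsets W (X ∪ Y) D = Wsets W X D * Wsets W Y D :=
  prod_union h

lemma Wsets_union_right (C : Finset α) {X Y : Finset α} (h : Disjoint X Y) :
    Wsets W C (X ∪ Y) = Wsets W C X * Wsets W C Y := by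
  unfold Wsets
  rw [← prod_mul_distrib]
  exact prod_congr rfl fun _ _ => prod_union h

lemma wDefendsIn_of_mem {U B : Finset α} {b : α} (hb : b ∈ B) :
    wDefendsIn W U B b ↔ ∀ a ∈ U, W a b ≠ 1 → sLE (Wsets W B {a}) (Wsets W {a} B) := by
  rw [wDefendsIn, insert_eq_of_mem hb]

lemma wConflictFree_union {X Y : Finset α} (hXY : Disjoint X Y) (hX : wConflictFree W X)
    (hY : wConflictFree W Y) (hXtoY : Wsets W X Y = 1) (hYtoX : Wsets W Y X = 1) :
    wConflictFree W (X ∪ Y) := by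
  unfold wConflictFree at *
  rw [Wsets_union_left hXY, Wsets_union_right X hXY, Wsets_union_right Y hXY,
    hX, hY, hXtoY, hYtoX, one_mul, one_mul]

lemma Wsets_eq_one_of_unattacked (habs : ∀ s t : S, s + s * t = s) {U Z T : Finset α}
    (hZ : ∀ z ∈ Z, wDefendsIn W U Z z) (hTU : T ⊆ U) (hZT : ∀ z ∈ Z, ∀ t ∈ T, W z t = 1) :
    Wsets W T Z = 1 := by
  refine prod_eq_one fun t ht => ?_
  by_contra hne
  obtain ⟨z, hz, htz⟩ := exists_ne_one_of_prod_ne_one hne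
  have hdef := (wDefendsIn_of_mem hz).mp (hZ z hz) t (hTU ht) htz
  rw [Wsets_singleton_right, prod_eq_one fun z hz => hZT z hz t ht, Wsets_singleton_left] at hdef
  exact hne (eq_one_of_one_sLE habs hdef)

lemma wDefendsIn_union_of_mem_left (habs : ∀ s t : S, s + s * t = s) {U Z T : Finset α}
    (hZT : Disjoint Z T) {b : α} (hb : b ∈ Z) (hZb : wDefendsIn W U Z b)
    (hT : ∀ t ∈ T, wDefendsIn W U (Z ∪ T) t) : wDefendsIn W U (Z ∪ T) b := by
  rw [wDefendsIn_of_mem (mem_union_left T hb)]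
  intro a ha hab
  by_cases hattT : ∃ t ∈ T, W a t ≠ 1
  · obtain ⟨t, ht, hat⟩ := hattT
    exact (wDefendsIn_of_mem (mem_union_right Z ht)).mp (hT t ht) a ha hat
  · push Not at hattT
    have haT : Wsets W {a} T = 1 := by rw [Wsets_singleton_left]; exact prod_eq_one hattT
    rw [Wsets_union_right {a} hZT, haT, mul_one, Wsets_union_left hZT]
    exact sLE_trans (sLE_mul_left habs _ _) ((wDefendsIn_of_mem hb).mp hZb a ha hab)

end Weights

theorem union_admissible_general (W : A → A → S)
    (habs : ∀ s t : S, s + s * t = s)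
    (Z : Finset A) (hZ : wAdmissibleIn W Finset.univ Z)
    (B : Finset A) (hB : ∀ a : A, a ∈ B ↔ a ∉ Z ∧ ∀ i ∈ Z, W i a = 1)
    (T : Finset A) (hT : T ⊆ B)
    (hTB : wAdmissibleIn W B T)
    (hdef : ∀ t ∈ T, wDefendsIn W Finset.univ (Z ∪ T) t) :
    wAdmissibleIn W Finset.univ (Z ∪ T) := by
  have hdisj : Disjoint Z T := disjoint_right.mpr fun {_} ht => ((hB _).1 (hT ht)).1
  have hZT : ∀ z ∈ Z, ∀ t ∈ T, W z t = 1 := fun z hz t ht => ((hB t).1 (hT ht)).2 z hz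
  refine ⟨subset_univ _, ?_, fun b hb => ?_⟩
  · exact wConflictFree_union hdisj hZ.2.1 hTB.2.1 (Wsets_eq_one hZT)
      (Wsets_eq_one_of_unattacked habs hZ.2.2 (subset_univ T) hZT)
  · rcases mem_union.mp hb with hbZ | hbT
    · exact wDefendsIn_union_of_mem_left habs hdisj hbZ (hZ.2.2 b hbZ) hdef
    · exact hdef b hbT

/-- Division/union theorem: if Z is w-admissible in F, B = A \ (Z ∪ R⁺(Z)) is the
remaining sub-framework's argument set, T ⊆ B is a w-admissible extension of F|_B, and
every argument of T is w-defended by Z ∪ T in F, then Z ∪ T is a w-admissible extension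
of F.  (Here a ∈ B iff a ∉ Z and no member of Z attacks a, i.e. W(i,a) = ⊤ for
all i ∈ Z.) -/
theorem union_admissible (W : A → A → S)
    (hadd : ∀ s : S, s + s = s) (habs : ∀ s t : S, s + s * t = s)
    (Z : Finset A) (hZ : wAdmissibleIn W Finset.univ Z)
    (B : Finset A) (hB : ∀ a : A, a ∈ B ↔ a ∉ Z ∧ ∀ i ∈ Z, W i a = 1)
    (T : Finset A) (hT : T ⊆ B)
    (hTB : wAdmissibleIn W B T)
    (hdef : ∀ t ∈ T, wDefendsIn W Finset.univ (Z ∪ T) t) :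
    wAdmissibleIn W Finset.univ (Z ∪ T) :=
  union_admissible_general W habs Z hZ B hB T hT hTB hdef
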